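/- For every positive integer n and every even integer d with d ≥ 2·rn(n)+2, the automaton R_{n,d} is not good for games: no transition strategy for R_{n,d} is winning for L(R_{n,d}). That is, for every transition strategy σ there exists a word w ∈ L(R_{n,d}) such that the run of R_{n,d} following σ reading w is rejecting. -/

import Mathlib

namespace PGSep

/-- Letters of the alphabet `Σ_{n,d}`: triples (source node, priority, target node). -/
abbrev Letter : Type := ℕ × ℕ × ℕ

/-- The priority component of a letter. -/
def prio (e : Letter) : ℕ := e.2.1

/-- Membership in the alphabet `Σ_{n,d} = {1,…,n} × {1,…,d} × {1,…,n}`. -/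
def InAlph (n d : ℕ) (e : Letter) : Prop :=
  1 ≤ e.1 ∧ e.1 ≤ n ∧ 1 ≤ e.2.1 ∧ e.2.1 ≤ d ∧ 1 ≤ e.2.2 ∧ e.2.2 ≤ n

/-- Infinite words over the alphabet. -/
abbrev Word : Type := ℕ → Letter

/-- `p` occurs infinitely often among the values of `f`. -/
def InfOft (f : ℕ → ℕ) (p : ℕ) : Prop := ∀ N, ∃ k, N ≤ k ∧ f k = p

/-- The largest value occurring infinitely often in `f` exists and is even. -/
def MaxInfOftEven (f : ℕ → ℕ) : Prop :=
  ∃ p, Even p ∧ InfOft f p ∧ ∀ q, InfOft f q → q ≤ p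

/-- The largest value occurring infinitely often in `f` exists and is odd. -/
def MaxInfOftOdd (f : ℕ → ℕ) : Prop :=
  ∃ p, Odd p ∧ InfOft f p ∧ ∀ q, InfOft f q → q ≤ p

/-- `LimsupEven_{n,d}`: the largest priority occurring infinitely often is even. -/
def LimsupEven (w : Word) : Prop := MaxInfOftEven fun k => prio (w k)

/-- `LimsupOdd_{n,d}`: the largest priority occurring infinitely often is odd. -/
def LimsupOdd (w : Word) : Prop := MaxInfOftOdd fun k => prio (w k)

/-- An infinite sequence of triples is a path in the edge set `E`. -/
def IsPathSeq {V : Type*} (E : Set (V × ℕ × V)) (w : ℕ → V × ℕ × V) : Prop :=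
  ∀ k, w k ∈ E ∧ (w k).2.2 = (w (k + 1)).1

/-- A game graph with `n` nodes (the set {1,…,n}) and priorities up to `d`. -/
structure GameGraph (n d : ℕ) where
  /-- nodes owned by Even (V_□) -/
  evenN : Set ℕ
  /-- nodes owned by Odd (V_△) -/
  oddN : Set ℕ
  /-- the starting node -/
  start : ℕ
  /-- the set of edges (a subset of the alphabet) -/
  edges : Set Letter
  union_eq : evenN ∪ oddN = Set.Icc 1 n
  disj : Disjoint evenN oddN
  start_mem : start ∈ Set.Icc 1 n
  edges_alph : ∀ e ∈ edges, InAlph n d e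
  total : ∀ v ∈ Set.Icc (1 : ℕ) n, ∃ e ∈ edges, e.1 = v

/-- A play in a game graph: an infinite path starting at the starting node,
identified with the word listing its consecutive edges. -/
def IsPlay {n d : ℕ} (G : GameGraph n d) (w : Word) : Prop :=
  (w 0).1 = G.start ∧ IsPathSeq G.edges w

/-- A positional strategy for Even: one outgoing edge for each node of `V_□`. -/
structure EPosStrat {n d : ℕ} (G : GameGraph n d) where
  choice : ℕ → Letter
  mem : ∀ v ∈ G.evenN, choice v ∈ G.edges ∧ (choice v).1 = v

/-- A positional strategy for Odd: one outgoing edge for each node of `V_△`. -/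
structure OPosStrat {n d : ℕ} (G : GameGraph n d) where
  choice : ℕ → Letter
  mem : ∀ v ∈ G.oddN, choice v ∈ G.edges ∧ (choice v).1 = v

/-- A play arises from a positional strategy of Even. -/
def ArisesE {n d : ℕ} {G : GameGraph n d} (τ : EPosStrat G) (w : Word) : Prop :=
  IsPlay G w ∧ ∀ k, (w k).1 ∈ G.evenN → w k = τ.choice (w k).1

/-- A play arises from a positional strategy of Odd. -/
def ArisesO {n d : ℕ} {G : GameGraph n d} (τ : OPosStrat G) (w : Word) : Prop :=
  IsPlay G w ∧ ∀ k, (w k).1 ∈ G.oddN → w k = τ.choice (w k).1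

/-- A positional strategy for Even is winning: every arising play is won by Even. -/
def EWinningPos {n d : ℕ} {G : GameGraph n d} (τ : EPosStrat G) : Prop :=
  ∀ w, ArisesE τ w → LimsupEven w

/-- A positional strategy for Odd is winning: every arising play is won by Odd
(i.e. not won by Even). -/
def OWinningPos {n d : ℕ} {G : GameGraph n d} (τ : OPosStrat G) : Prop :=
  ∀ w, ArisesO τ w → ¬ LimsupEven w

/-- `PosEven_{n,d}`: plays arising from positional winning strategies for Even. -/
def PosEven (n d : ℕ) : Set Word :=
  {w | ∃ G : GameGraph n d, ∃ τ : EPosStrat G, EWinningPos τ ∧ ArisesE τ w}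

/-- `PosOdd_{n,d}`: plays arising from positional winning strategies for Odd. -/
def PosOdd (n d : ℕ) : Set Word :=
  {w | ∃ G : GameGraph n d, ∃ τ : OPosStrat G, OWinningPos τ ∧ ArisesO τ w}

/-- A nondeterministic automaton reading letters, with state space `Q`. -/
structure Automaton (Q : Type*) where
  init : Q
  trans : Set (Q × Letter × ℕ × Q)

/-- Transitions: (source state, letter, emitted priority, target state). -/
abbrev Trans (Q : Type*) : Type _ := Q × Letter × ℕ × Q

def tSrc {Q : Type*} (t : Trans Q) : Q := t.1
def tLetter {Q : Type*} (t : Trans Q) : Letter := t.2.1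
def tPrio {Q : Type*} (t : Trans Q) : ℕ := t.2.2.1
def tTgt {Q : Type*} (t : Trans Q) : Q := t.2.2.2

/-- `A` is a (total) nondeterministic parity automaton over `Σ_{n,d}` with
transition priorities in `{1,…,d'}`. -/
def IsParityAutomaton (n d d' : ℕ) {Q : Type*} (A : Automaton Q) : Prop :=
  (∀ t ∈ A.trans, InAlph n d (tLetter t) ∧ 1 ≤ tPrio t ∧ tPrio t ≤ d') ∧
  (∀ (s : Q) (e : Letter), InAlph n d e → ∃ p s', (s, e, p, s') ∈ A.trans)

/-- A run of the automaton: an infinite path of transitions starting at `init`. -/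
def IsRun {Q : Type*} (A : Automaton Q) (ρ : ℕ → Trans Q) : Prop :=
  tSrc (ρ 0) = A.init ∧ ∀ k, ρ k ∈ A.trans ∧ tTgt (ρ k) = tSrc (ρ (k + 1))

/-- The run `ρ` reads the word `w`. -/
def Reads {Q : Type*} (ρ : ℕ → Trans Q) (w : Word) : Prop := ∀ k, tLetter (ρ k) = w k

/-- A run is accepting: the largest priority labelling infinitely many
of its transitions is even. -/
def Accepting {Q : Type*} (ρ : ℕ → Trans Q) : Prop := MaxInfOftEven fun k => tPrio (ρ k)

/-- The language of the automaton. -/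
def Lang {Q : Type*} (A : Automaton Q) : Set Word :=
  {w | ∃ ρ, IsRun A ρ ∧ Reads ρ w ∧ Accepting ρ}

/-- A transition strategy for `A`, resolving nondeterminism based on the word read
so far, the current state, and the next letter. -/
structure TransStrat (n d : ℕ) {Q : Type*} (A : Automaton Q) where
  app : List Letter → Q → Letter → Trans Q
  valid : ∀ w s e, InAlph n d e →
    app w s e ∈ A.trans ∧ tSrc (app w s e) = s ∧ tLetter (app w s e) = e

/-- The state reached after reading the first `k` letters of `w` following `σ`. -/
def stateAt {n d : ℕ} {Q : Type*} (A : Automaton Q) (σ : TransStrat n d A) (w : Word) :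
    ℕ → Q
  | 0 => A.init
  | k + 1 => tTgt (σ.app ((List.range k).map w) (stateAt A σ w k) (w k))

/-- The run obtained by following the transition strategy `σ` while reading `w`. -/
def followRun {n d : ℕ} {Q : Type*} (A : Automaton Q) (σ : TransStrat n d A) (w : Word)
    (k : ℕ) : Trans Q :=
  σ.app ((List.range k).map w) (stateAt A σ w k) (w k)

/-- The transition strategy `σ` is winning for the set of words `L`. -/
def WinningFor {n d : ℕ} {Q : Type*} (A : Automaton Q) (σ : TransStrat n d A)
    (L : Set Word) : Prop :=
  ∀ w ∈ L, Accepting (followRun A σ w)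

/-- `A` is good for games: some transition strategy is winning for the whole `L(A)`. -/
def GFG (n d : ℕ) {Q : Type*} (A : Automaton Q) : Prop :=
  ∃ σ : TransStrat n d A, WinningFor A σ (Lang A)

/-- `A` is a parity-games separator. -/
def PGSeparator (n d : ℕ) {Q : Type*} (A : Automaton Q) : Prop :=
  (∀ w ∈ PosEven n d, w ∈ Lang A) ∧ ∀ w ∈ PosOdd n d, w ∉ Lang A

/-- `A` is a strong PG separator: additionally it rejects all of `LimsupOdd`. -/
def StrongPGSeparator (n d : ℕ) {Q : Type*} (A : Automaton Q) : Prop :=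
  PGSeparator n d A ∧ ∀ w : Word, LimsupOdd w → w ∉ Lang A

/-- `A` is suitable for parity games (SFPG). -/
def SFPG (n d : ℕ) {Q : Type*} (A : Automaton Q) : Prop :=
  PGSeparator n d A ∧
  ∀ (G : GameGraph n d) (τ : EPosStrat G), EWinningPos τ →
    ∃ σ : TransStrat n d A, WinningFor A σ {w | ArisesE τ w}

/-- A generic game with parity winning condition, over an arbitrary set of nodes. -/
structure PGame (V : Type*) where
  evenOwn : V → Prop
  start : V
  edges : Set (V × ℕ × V)

/-- A play of a generic game. -/
def PGame.IsPlay {V : Type*} (g : PGame V) (w : ℕ → V × ℕ × V) : Prop :=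
  (w 0).1 = g.start ∧ IsPathSeq g.edges w

/-- `IsFinPath E u l v`: the list of edges `l` is a finite path from `u` to `v`. -/
def IsFinPath {V : Type*} (E : Set (V × ℕ × V)) : V → List (V × ℕ × V) → V → Prop
  | u, [], v => u = v
  | u, e :: l, v => e ∈ E ∧ e.1 = u ∧ IsFinPath E e.2.2 l v

/-- Even has a winning strategy in the game `g`. -/
def EvenWins {V : Type*} (g : PGame V) : Prop :=
  ∃ str : List (V × ℕ × V) → V × ℕ × V,
    (∀ l v, IsFinPath g.edges g.start l v → g.evenOwn v →
      str l ∈ g.edges ∧ (str l).1 = v) ∧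
    ∀ w, g.IsPlay w → (∀ k, g.evenOwn ((w k).1) → w k = str ((List.range k).map w)) →
      MaxInfOftEven fun k => (w k).2.1

/-- Odd has a winning strategy in the game `g`. -/
def OddWins {V : Type*} (g : PGame V) : Prop :=
  ∃ str : List (V × ℕ × V) → V × ℕ × V,
    (∀ l v, IsFinPath g.edges g.start l v → ¬ g.evenOwn v →
      str l ∈ g.edges ∧ (str l).1 = v) ∧
    ∀ w, g.IsPlay w → (∀ k, ¬ g.evenOwn ((w k).1) → w k = str ((List.range k).map w)) →
      ¬ MaxInfOftEven fun k => (w k).2.1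

/-- Even has a strategy winning for the safety condition `safe` in the game `g`. -/
def EvenWinsSafety {V : Type*} (g : PGame V) (safe : V → Prop) : Prop :=
  ∃ str : List (V × ℕ × V) → V × ℕ × V,
    (∀ l v, IsFinPath g.edges g.start l v → g.evenOwn v →
      str l ∈ g.edges ∧ (str l).1 = v) ∧
    ∀ w, g.IsPlay w → (∀ k, g.evenOwn ((w k).1) → w k = str ((List.range k).map w)) →
      ∀ k, safe (w k).2.2

/-- A game graph viewed as a generic game. -/
def GameGraph.toPGame {n d : ℕ} (G : GameGraph n d) : PGame ℕ :=
  { evenOwn := fun v => v ∈ G.evenN, start := G.start, edges := G.edges }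

/-- The synchronized product `G × A`. -/
def prodGame {n d : ℕ} {Q : Type*} (G : GameGraph n d) (A : Automaton Q) :
    PGame ((ℕ ⊕ Letter) × Q) where
  evenOwn := fun x => match x.1 with
    | Sum.inl v => v ∈ G.evenN
    | Sum.inr _ => True
  start := (Sum.inl G.start, A.init)
  edges := {ed | (∃ e ∈ G.edges, ∃ s : Q, ed = ((Sum.inl e.1, s), 1, (Sum.inr e, s))) ∨
    (∃ t ∈ A.trans, tLetter t ∈ G.edges ∧
      ed = ((Sum.inr (tLetter t), tSrc t), tPrio t, (Sum.inl (tLetter t).2.2, tTgt t)))}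

/-- The number of registers: `rn(n) = 1 + ⌊log₂ n⌋`. -/
def rn (n : ℕ) : ℕ := 1 + Nat.log 2 n

/-- Update of a register state (bottom register first) by priority `p`:
the maximal prefix of registers smaller than `p` is replaced by `p`. -/
def update (p : ℕ) : List ℕ → List ℕ
  | [] => []
  | r :: l => if r < p then p :: update p l else r :: l

/-- The `k`-reset (registers numbered from 1, bottom first): the `k`-th register is
removed and a `1` is inserted at the bottom. -/
def resetReg (k : ℕ) (l : List ℕ) : List ℕ := 1 :: l.eraseIdx (k - 1)

/-- The value of register number `k` (registers numbered from 1, bottom first). -/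
def regVal (k : ℕ) (l : List ℕ) : ℕ := l.getD (k - 1) 0

/-- Lehtinen's register automaton `R_{n,d}`. -/
def Raut (n d : ℕ) : Automaton (List ℕ) where
  init := List.replicate (rn n) 1
  trans := {t | ∃ s e, InAlph n d e ∧
    (t = (s, e, 1, update (prio e) s) ∨
     ∃ k, 1 ≤ k ∧ k ≤ rn n ∧
       ((Even (regVal k (update (prio e) s)) ∧
           t = (s, e, 2 * k, resetReg k (update (prio e) s))) ∨
        (Odd (regVal k (update (prio e) s)) ∧
           t = (s, e, 2 * k + 1, resetReg k (update (prio e) s)))))}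

/-- States of the safety automaton `S_{n,d}`: `none` is the rejecting state `rej`;
otherwise a state of `R_{n,d}` together with a tuple of counters (bottom first:
`c_0` is the head). -/
abbrev SState : Type := Option (List ℕ × List ℕ)

/-- Counters `c_0,…,c_{k-1}` are reset to `c0`; the rest is kept. -/
def bumpKeep (c0 k : ℕ) (c : List ℕ) : List ℕ := List.replicate k c0 ++ c.drop k

/-- Counters `c_0,…,c_{k-1}` are reset to `c0`; counter `c_k` is decremented. -/
def bumpDec (c0 k : ℕ) (c : List ℕ) : List ℕ :=
  List.replicate k c0 ++ ((c.getD k 0 - 1) :: c.drop (k + 1))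

/-- The safety automaton `S_{n,d}`. -/
def Saut (n d : ℕ) : Automaton SState where
  init := some (List.replicate (rn n) 1, List.replicate (rn n + 1) n)
  trans := {t |
    (∃ e, InAlph n d e ∧ t = (none, e, 1, none)) ∨
    (∃ s c e k s', 1 ≤ k ∧ (s, e, 2 * k, s') ∈ (Raut n d).trans ∧
       t = (some (s, c), e, 2, some (s', bumpKeep n k c))) ∨
    (∃ s c e k s', (s, e, 2 * k + 1, s') ∈ (Raut n d).trans ∧
       ((1 < c.getD k 0 ∧ t = (some (s, c), e, 2, some (s', bumpDec n k c))) ∨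
        (c.getD k 0 = 1 ∧ t = (some (s, c), e, 1, none))))}

/-- `bad(ρ) ≤ B` for an infinite run `ρ`: every infix containing no transition of
priority above an odd `p` contains at most `B` transitions of priority `p`. -/
def badLE {Q : Type*} (ρ : ℕ → Trans Q) (B : ℕ) : Prop :=
  ∀ a b p, Odd p → (∀ i, a ≤ i → i < b → tPrio (ρ i) ≤ p) →
    ((Finset.Ico a b).filter fun i => tPrio (ρ i) = p).card ≤ B

/-- `bad(ρ) ≤ B` for a partial run of length `L` (possibly infinite). -/
def badLEPartial {Q : Type*} (ρ : ℕ → Trans Q) (L : ℕ∞) (B : ℕ) : Prop :=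
  ∀ (a b p : ℕ), Odd p → (b : ℕ∞) ≤ L → (∀ i, a ≤ i → i < b → tPrio (ρ i) ≤ p) →
    ((Finset.Ico a b).filter fun i => tPrio (ρ i) = p).card ≤ B

/-- The strategy subgraph `G_τ`: all outgoing edges of Odd's nodes, and only the
chosen edge from each of Even's nodes. -/
def GtauEdges {n d : ℕ} (G : GameGraph n d) (τ : EPosStrat G) : Set Letter :=
  {e | e ∈ G.edges ∧ (e.1 ∈ G.evenN → e = τ.choice e.1)}

/-- One step along an edge of `E`. -/
def StepRel (E : Set Letter) (u v : ℕ) : Prop := ∃ p, (u, p, v) ∈ E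

/-- Reachability along edges of `E`. -/
def Reach (E : Set Letter) : ℕ → ℕ → Prop := Relation.ReflTransGen (StepRel E)

/-- `V_τ`: the nodes of `G_τ` reachable from the starting node. -/
def Vtau {n d : ℕ} (G : GameGraph n d) (τ : EPosStrat G) : Set ℕ :=
  {v | Reach (GtauEdges G τ) G.start v}

/-- `G_{S,p}`: edges of `E` inside `S` of priority at most `p`. -/
def subEdges (E : Set Letter) (S : Set ℕ) (p : ℕ) : Set Letter :=
  {e | e ∈ E ∧ e.1 ∈ S ∧ e.2.2 ∈ S ∧ prio e ≤ p}

/-- `parts` lists the strongly connected components of the graph `(S, E)` in a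
topological order. -/
def IsSCCDecomp (E : Set Letter) (S : Set ℕ) (parts : List (Set ℕ)) : Prop :=
  (∀ P ∈ parts, P.Nonempty ∧ P ⊆ S) ∧
  (∀ v ∈ S, ∃ P ∈ parts, v ∈ P) ∧
  List.Pairwise Disjoint parts ∧
  (∀ P ∈ parts, ∀ u ∈ P, ∀ v ∈ S, ((Reach E u v ∧ Reach E v u) ↔ v ∈ P)) ∧
  (∀ (i j : ℕ) (hi : i < parts.length) (hj : j < parts.length), i < j →
    ∀ u ∈ parts.get ⟨j, hj⟩, ∀ v ∈ parts.get ⟨i, hi⟩, ¬ StepRel E u v)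

/-- The nodes of a tree given by the children function `ch` with root `(r, R)`. -/
inductive TreeNode (ch : ℕ → Set ℕ → List (Set ℕ)) (r : ℕ) (R : Set ℕ) :
    ℕ → Set ℕ → Prop where
  | root : TreeNode ch r R r R
  | child {k : ℕ} {S T : Set ℕ} : TreeNode ch r R (k + 1) S → T ∈ ch (k + 1) S →
      TreeNode ch r R k T

/-- `ch` describes a game tree of `G_τ`: the root is `(⌈d/2⌉, V_τ)`, and the children
of a node `(k+1, S)` are the SCCs of `G_{S,2(k+1)-1}` in topological order. -/
def IsGameTree {n d : ℕ} (G : GameGraph n d) (τ : EPosStrat G)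
    (ch : ℕ → Set ℕ → List (Set ℕ)) : Prop :=
  ∀ k S, TreeNode ch ((d + 1) / 2) (Vtau G τ) (k + 1) S →
    IsSCCDecomp (subEdges (GtauEdges G τ) S (2 * (k + 1) - 1)) S (ch (k + 1) S)

/-- `fstl ch l k S`: the leftmost descendant of the node `(k, S)` on level `l`
(for `l ≤ k`). -/
def fstl (ch : ℕ → Set ℕ → List (Set ℕ)) (l : ℕ) : ℕ → Set ℕ → Set ℕ
  | 0, S => S
  | k + 1, S => if l = k + 1 then S else fstl ch l k ((ch (k + 1) S).headD ∅)

/-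
The adversary answers every transition of priority `p` that `σ` takes with a letter of
priority `p + 1`. Suppose the run of `σ` were accepting, with top priority `2K`. Then the letters
eventually stay at most `2K + 1`, so no register above `2K + 1` is ever created again and such
registers can be reset only finitely often. After that, a letter `2K + 1` raises register `K`
to `2K + 1`, and it stays there: resetting it or a register above it would find the odd value
`2K + 1` and emit an odd priority above `2K`. So no further reset of priority `2K` happens, a
contradiction. Hence the run rejects with an odd top priority `M`, while the word has the even
top priority `M + 1`. Every word with even top priority `E` is accepted by the run that resets
the top register at each letter `E`: by the same counting, the top register eventually holds
exactly `E` at those resets.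
-/

open Filter

section Sequences

variable {f g : ℕ → ℕ}

theorem infOft_iff_frequently {p : ℕ} : InfOft f p ↔ ∃ᶠ k in atTop, f k = p :=
  frequently_atTop.symm

theorem InfOft.le_of_eventually_le {p M : ℕ} (hp : InfOft f p)
    (hM : ∀ᶠ k in atTop, f k ≤ M) : p ≤ M := by
  obtain ⟨k, rfl, hk⟩ := ((infOft_iff_frequently.1 hp).and_eventually hM).exists
  exact hk

theorem eventually_le_of_forall_infOft_le {B M : ℕ} (hB : ∀ k, f k ≤ B)
    (hM : ∀ q, InfOft f q → q ≤ M) : ∀ᶠ k in atTop, f k ≤ M := by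
  have hne : ∀ q ∈ Finset.Ioc M B, ∀ᶠ k in atTop, f k ≠ q := fun q hq =>
    not_frequently.1 fun h => by
      have := hM q (infOft_iff_frequently.2 h)
      simp only [Finset.mem_Ioc] at hq
      omega
  filter_upwards [(eventually_all_finset _).2 hne] with k hk
  by_contra hlt
  exact hk (f k) (Finset.mem_Ioc.2 ⟨by omega, hB k⟩) rfl

theorem exists_maxInfOft {B : ℕ} (hB : ∀ k, f k ≤ B) :
    ∃ M, InfOft f M ∧ ∀ q, InfOft f q → q ≤ M := by
  classical
  obtain ⟨q, hq⟩ : ∃ q, InfOft f q := by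
    by_contra! h
    have h0 := eventually_le_of_forall_infOft_le hB (M := 0) fun q hq => (h q hq).elim
    exact h 0 (infOft_iff_frequently.2 (h0.mono fun k hk => by omega).frequently)
  have hle : ∀ {q}, InfOft f q → q ≤ B := fun hq => hq.le_of_eventually_le (.of_forall hB)
  exact ⟨Nat.findGreatest (InfOft f) B, Nat.findGreatest_spec (hle hq) hq,
    fun q hq => Nat.le_findGreatest (hle hq) hq⟩

theorem MaxInfOftOdd.of_not_maxInfOftEven {B : ℕ} (hB : ∀ k, f k ≤ B)
    (h : ¬ MaxInfOftEven f) : MaxInfOftOdd f := by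
  obtain ⟨M, hM, hmax⟩ := exists_maxInfOft hB
  exact ⟨M, Nat.not_even_iff_odd.1 fun he => h ⟨M, he, hM, hmax⟩, hM, hmax⟩

theorem MaxInfOftOdd.maxInfOftEven_of_succ (hg : ∀ k, g (k + 1) = f k + 1)
    (h : MaxInfOftOdd f) : MaxInfOftEven g := by
  obtain ⟨M, hodd, hM, hmax⟩ := h
  refine ⟨M + 1, hodd.add_one, fun N => ?_, fun q hq => ?_⟩
  · obtain ⟨k, hk, rfl⟩ := hM N
    exact ⟨k + 1, by omega, hg k⟩
  · have hf : InfOft f (q - 1) := fun N => by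
      obtain ⟨j, hj, hjq⟩ := hq (N + 1)
      obtain ⟨i, rfl⟩ : ∃ i, j = i + 1 := ⟨j - 1, by omega⟩
      exact ⟨i, by omega, by rw [hg] at hjq; omega⟩
    have := hmax _ hf
    omega

theorem eventually_not_of_eventually_decreasing {P : ℕ → Prop}
    (h : ∀ᶠ k in atTop, f (k + 1) ≤ f k ∧ (P k → f (k + 1) < f k)) :
    ∀ᶠ k in atTop, ¬ P k := by
  obtain ⟨N, hN⟩ := eventually_atTop.1 h
  set T := N + Function.argmin fun i => f (N + i)
  have hmin : ∀ k ≥ N, f T ≤ f k := fun k hk => by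
    simpa [show N + (k - N) = k by omega] using Function.argmin_le (fun i => f (N + i)) (k - N)
  have hanti : ∀ k ≥ T, f k ≤ f T := fun k hk => by
    induction k, hk using Nat.le_induction with
    | base => exact le_rfl
    | succ k hk ih => exact (hN k (by omega)).1.trans ih
  filter_upwards [eventually_ge_atTop T] with k hk hP
  have := (hN k (by omega)).2 hP
  have := hmin (k + 1) (by omega)
  have := hanti k hk
  omega

end Sequences

section Strategies

variable {n d : ℕ} {Q : Type*} {A : Automaton Q} (σ : TransStrat n d A) {w w' : Word}

theorem stateAt_congr {k : ℕ} (h : ∀ i < k, w i = w' i) :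
    stateAt A σ w k = stateAt A σ w' k := by
  induction k with
  | zero => rfl
  | succ k ih =>
    have hrange : (List.range k).map w = (List.range k).map w' :=
      List.map_congr_left fun i hi => h i (by rw [List.mem_range] at hi; omega)
    simp only [stateAt, hrange, ih fun i hi => h i (by omega), h k (by omega)]

theorem followRun_congr {k : ℕ} (h : ∀ i ≤ k, w i = w' i) :
    followRun A σ w k = followRun A σ w' k := by
  have hrange : (List.range k).map w = (List.range k).map w' :=
    List.map_congr_left fun i hi => h i (by rw [List.mem_range] at hi; omega)
  simp only [followRun, hrange, stateAt_congr σ fun i hi => h i hi.le, h k le_rfl]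

theorem followRun_mem_trans {k : ℕ} (hw : InAlph n d (w k)) :
    followRun A σ w k ∈ A.trans :=
  (σ.valid _ _ _ hw).1

theorem isRun_followRun (hw : ∀ k, InAlph n d (w k)) : IsRun A (followRun A σ w) :=
  ⟨(σ.valid _ _ _ (hw 0)).2.1,
    fun k => ⟨followRun_mem_trans σ (hw k), ((σ.valid _ _ _ (hw (k + 1))).2.1).symm⟩⟩

theorem reads_followRun (hw : ∀ k, InAlph n d (w k)) : Reads (followRun A σ w) w :=
  fun k => (σ.valid _ _ _ (hw k)).2.2

theorem mem_lang_of_accepting_followRun (hw : ∀ k, InAlph n d (w k))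
    (h : Accepting (followRun A σ w)) : w ∈ Lang A :=
  ⟨_, isRun_followRun σ hw, reads_followRun σ hw, h⟩

/-- The sequence `x` with `x 0 = a` and `x (k + 1) = F x k`, which is well defined when
`F x k` only depends on `x 0, …, x k`. -/
def causalFix {α : Type*} (a : α) (F : (ℕ → α) → ℕ → α) : ℕ → α
  | 0 => a
  | k + 1 => F (fun i => if _ : i ≤ k then causalFix a F i else a) k
termination_by k => k
decreasing_by omega

theorem causalFix_succ {α : Type*} {a : α} {F : (ℕ → α) → ℕ → α}
    (hF : ∀ x y k, (∀ i ≤ k, x i = y i) → F x k = F y k) (k : ℕ) :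
    causalFix a F (k + 1) = F (causalFix a F) k := by
  rw [causalFix]
  exact hF _ _ k fun i hi => dif_pos hi

def echoWord (A : Automaton Q) (σ : TransStrat n d A) : Word :=
  causalFix (1, 1, 1) fun w k => (1, tPrio (followRun A σ w k) + 1, 1)

theorem echoWord_succ (k : ℕ) :
    echoWord A σ (k + 1) = (1, tPrio (followRun A σ (echoWord A σ) k) + 1, 1) :=
  causalFix_succ (fun _ _ _ h => by rw [followRun_congr σ h]) k

theorem inAlph_echoWord (hn : 1 ≤ n) (hd : 1 ≤ d) (hA : ∀ t ∈ A.trans, tPrio t < d) (k : ℕ) :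
    InAlph n d (echoWord A σ k) := by
  induction k with
  | zero =>
    rw [echoWord, causalFix]
    exact ⟨le_rfl, hn, le_rfl, hd, le_rfl, hn⟩
  | succ k ih =>
    have := hA _ (followRun_mem_trans σ ih)
    rw [echoWord_succ]
    exact ⟨le_rfl, hn, Nat.le_add_left _ _, this, le_rfl, hn⟩

end Strategies

section Registers

variable {p c j k : ℕ} {s l : List ℕ}

theorem update_eq_map_max (hs : s.Pairwise (· ≤ ·)) (p : ℕ) : update p s = s.map (max p) := by
  induction s with
  | nil => rfl
  | cons r l ih =>
    rw [List.pairwise_cons] at hs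
    unfold update
    split
    · simp [ih hs.2, le_of_lt ‹r < p›]
    · have hr : p ≤ r := not_lt.1 ‹_›
      have hl : ∀ x ∈ l, max p x = x := fun x hx => max_eq_right (hr.trans (hs.1 x hx))
      simp [List.map_congr_left hl, hr]

theorem countP_update_of_lt (hp : p < c) (s : List ℕ) :
    (update p s).countP (c ≤ ·) = s.countP (c ≤ ·) := by
  induction s with
  | nil => rfl
  | cons r l ih =>
    unfold update
    split
    · simp only [List.countP_cons, ih]
      simp [show ¬ c ≤ p by omega, show ¬ c ≤ r by omega]
    · rfl

theorem regVal_update (hs : s.Pairwise (· ≤ ·)) (hk : 1 ≤ k) (hks : k ≤ s.length) :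
    regVal k (update p s) = max p (regVal k s) := by
  rw [update_eq_map_max hs, regVal, regVal, List.getD_eq_getElem _ _ (by simp; omega),
    List.getD_eq_getElem _ _ (by omega), List.getElem_map]

theorem regVal_le_regVal (hl : l.Pairwise (· ≤ ·)) (hj : 1 ≤ j) (hjk : j ≤ k)
    (hk : k ≤ l.length) : regVal j l ≤ regVal k l := by
  rw [regVal, regVal, List.getD_eq_getElem _ _ (by omega), List.getD_eq_getElem _ _ (by omega)]
  exact List.sortedLE_iff_getElem_le_getElem_of_le.1 hl.sortedLE (by omega)

theorem length_resetReg (hk : 1 ≤ k) (hkl : k ≤ l.length) :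
    (resetReg k l).length = l.length := by
  simp only [resetReg, List.length_cons, List.length_eraseIdx]
  split <;> omega

theorem countP_resetReg (hc : 2 ≤ c) (hk : 1 ≤ k) (hkl : k ≤ l.length) :
    (resetReg k l).countP (c ≤ ·) + (if c ≤ regVal k l then 1 else 0) = l.countP (c ≤ ·) := by
  have hk' : k - 1 < l.length := by omega
  rw [← (List.getElem_cons_eraseIdx_perm hk').countP_eq, resetReg, regVal,
    List.getD_eq_getElem _ _ hk']
  simp only [List.countP_cons, decide_eq_true_eq]
  rw [if_neg (show ¬ c ≤ 1 by omega), Nat.add_zero]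

theorem regVal_resetReg_of_lt (hj : 1 ≤ j) (hjk : j < k) (hk : k ≤ l.length) :
    regVal k (resetReg j l) = regVal k l := by
  have hlen : k - 2 < (l.eraseIdx (j - 1)).length := by
    rw [List.length_eraseIdx, if_pos (by omega)]
    omega
  rw [regVal, regVal, resetReg, show k - 1 = k - 2 + 1 by omega, List.getD_cons_succ,
    List.getD_eq_getElem _ _ hlen, List.getElem_eraseIdx_of_ge hlen (by omega),
    List.getD_eq_getElem _ _ (by omega)]

theorem one_le_rn (n : ℕ) : 1 ≤ rn n := by
  unfold rn
  omega

/-- Registers are listed bottom first, so the states occurring in runs are non-decreasing. -/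
def IsRegState (n : ℕ) (s : List ℕ) : Prop :=
  s.Pairwise (· ≤ ·) ∧ s.length = rn n ∧ ∀ x ∈ s, 1 ≤ x

theorem IsRegState.update {n : ℕ} (hs : IsRegState n s) (hp : 1 ≤ p) :
    IsRegState n (update p s) := by
  obtain ⟨hsort, hlen, hpos⟩ := hs
  rw [update_eq_map_max hsort]
  refine ⟨List.pairwise_map.2 (hsort.imp fun h => max_le_max le_rfl h), by simp [hlen], ?_⟩
  simp only [List.mem_map]
  rintro _ ⟨x, -, rfl⟩
  exact hp.trans (le_max_left _ _)

theorem IsRegState.resetReg {n : ℕ} (hs : IsRegState n s) (hk : 1 ≤ k) (hkn : k ≤ rn n) :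
    IsRegState n (resetReg k s) := by
  obtain ⟨hsort, hlen, hpos⟩ := hs
  have hsub := s.eraseIdx_sublist (k - 1)
  refine ⟨List.pairwise_cons.2 ⟨fun x hx => hpos x (hsub.subset hx), hsort.sublist hsub⟩,
    by rw [length_resetReg hk (by omega), hlen], ?_⟩
  rintro x (_ | ⟨_, hx⟩)
  exacts [le_rfl, hpos x (hsub.subset hx)]

end Registers

section RegisterAutomaton

variable {n d : ℕ}

theorem mem_trans_Raut {s s' : List ℕ} {e : Letter} {p : ℕ} :
    (s, e, p, s') ∈ (Raut n d).trans ↔ InAlph n d e ∧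
      ((p = 1 ∧ s' = update (prio e) s) ∨
        ∃ k, 1 ≤ k ∧ k ≤ rn n ∧ p = 2 * k + regVal k (update (prio e) s) % 2 ∧
          s' = resetReg k (update (prio e) s)) := by
  simp only [Raut, Set.mem_ofPred_eq, Prod.mk.injEq]
  constructor
  · rintro ⟨s, e, he, ⟨rfl, rfl, rfl, rfl⟩ |
      ⟨k, hk1, hk, ⟨hev, rfl, rfl, rfl, rfl⟩ | ⟨hodd, rfl, rfl, rfl, rfl⟩⟩⟩
    · exact ⟨he, Or.inl ⟨rfl, rfl⟩⟩
    · exact ⟨he, Or.inr ⟨k, hk1, hk, by simp [Nat.even_iff.1 hev], rfl⟩⟩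
    · exact ⟨he, Or.inr ⟨k, hk1, hk, by rw [Nat.odd_iff.1 hodd], rfl⟩⟩
  · rintro ⟨he, ⟨rfl, rfl⟩ | ⟨k, hk1, hk, rfl, rfl⟩⟩
    · exact ⟨s, e, he, Or.inl ⟨rfl, rfl, rfl, rfl⟩⟩
    · refine ⟨s, e, he, Or.inr ⟨k, hk1, hk, ?_⟩⟩
      rcases Nat.even_or_odd (regVal k (update (prio e) s)) with h | h
      · exact Or.inl ⟨h, rfl, rfl, by simp [Nat.even_iff.1 h], rfl⟩
      · exact Or.inr ⟨h, rfl, rfl, by rw [Nat.odd_iff.1 h], rfl⟩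

def preReset (t : Trans (List ℕ)) : List ℕ := update (prio (tLetter t)) (tSrc t)

theorem Raut_trans_cases {t : Trans (List ℕ)} (ht : t ∈ (Raut n d).trans) :
    (tPrio t = 1 ∧ tTgt t = preReset t) ∨
      ∃ k, 1 ≤ k ∧ k ≤ rn n ∧ tPrio t = 2 * k + regVal k (preReset t) % 2 ∧
        tTgt t = resetReg k (preReset t) :=
  (mem_trans_Raut.1 ht).2

theorem Raut_tPrio_bounds {t : Trans (List ℕ)} (ht : t ∈ (Raut n d).trans) :
    1 ≤ tPrio t ∧ tPrio t ≤ 2 * rn n + 1 := by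
  rcases Raut_trans_cases ht with ⟨h, -⟩ | ⟨k, hk, hkn, h, -⟩ <;> omega

theorem isRegState_init : IsRegState n (Raut n d).init :=
  ⟨List.pairwise_replicate.2 (Or.inr le_rfl), List.length_replicate,
    fun _ hx => (List.eq_of_mem_replicate hx).ge⟩

theorem IsRegState.tTgt {t : Trans (List ℕ)} (ht : t ∈ (Raut n d).trans)
    (hs : IsRegState n (tSrc t)) : IsRegState n (tTgt t) := by
  have hpre : IsRegState n (preReset t) := hs.update (mem_trans_Raut.1 ht).1.2.2.1
  rcases Raut_trans_cases ht with ⟨-, h⟩ | ⟨k, hk, hkn, -, h⟩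
  · exact h ▸ hpre
  · exact h ▸ hpre.resetReg hk hkn

theorem IsRun.isRegState {ρ : ℕ → Trans (List ℕ)} (hρ : IsRun (Raut n d) ρ) (k : ℕ) :
    IsRegState n (tSrc (ρ k)) := by
  induction k with
  | zero => exact hρ.1 ▸ isRegState_init
  | succ k ih => exact (hρ.2 k).2 ▸ ih.tTgt (hρ.2 k).1

theorem IsRun.eventually_regVal_reset_le {ρ : ℕ → Trans (List ℕ)} (hρ : IsRun (Raut n d) ρ)
    {c : ℕ} (hc : 1 ≤ c) (hle : ∀ᶠ k in atTop, prio (tLetter (ρ k)) ≤ c) :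
    ∀ᶠ k in atTop, ∀ j, 1 ≤ j → j ≤ rn n → tTgt (ρ k) = resetReg j (preReset (ρ k)) →
      regVal j (preReset (ρ k)) ≤ c := by
  -- Registers above `c` are never created any more, so each reset of one uses up one of them.
  let big : ℕ → ℕ := fun k => (tSrc (ρ k)).countP (c + 1 ≤ ·)
  have hdec := eventually_not_of_eventually_decreasing (f := big)
    (P := fun k => ∃ j, 1 ≤ j ∧ j ≤ rn n ∧ tTgt (ρ k) = resetReg j (preReset (ρ k)) ∧
      c < regVal j (preReset (ρ k))) <| by
    filter_upwards [hle] with k hk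
    have hpre : (preReset (ρ k)).countP (c + 1 ≤ ·) = big k :=
      countP_update_of_lt (by omega) _
    have hnext : big (k + 1) = (tTgt (ρ k)).countP (c + 1 ≤ ·) := by
      simp only [big, (hρ.2 k).2]
    have hlen : (preReset (ρ k)).length = rn n := ((hρ.isRegState k).update
      (mem_trans_Raut.1 (hρ.2 k).1).1.2.2.1).2.1
    constructor
    · rcases Raut_trans_cases (hρ.2 k).1 with ⟨-, htgt⟩ | ⟨j, hj, hjn, -, htgt⟩
      · rw [hnext, htgt, hpre]
      · have := countP_resetReg (c := c + 1) (by omega) hj (hlen ▸ hjn)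
        rw [hnext, htgt]
        omega
    · rintro ⟨j, hj, hjn, htgt, hlt⟩
      have := countP_resetReg (c := c + 1) (by omega) hj (hlen ▸ hjn)
      rw [if_pos (Nat.succ_le_of_lt hlt)] at this
      rw [hnext, htgt]
      omega
  filter_upwards [hdec] with k hk j hj hjn htgt
  by_contra! hlt
  exact hk ⟨j, hj, hjn, htgt, hlt⟩

theorem Raut_trans_keeps_high_register {t : Trans (List ℕ)} (ht : t ∈ (Raut n d).trans)
    (hs : IsRegState n (tSrc t)) {K : ℕ} (hK : 1 ≤ K) (hKn : K ≤ rn n)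
    (hprio : tPrio t ≤ 2 * K)
    (hreset : ∀ j, 1 ≤ j → j ≤ rn n → tTgt t = resetReg j (preReset t) →
      regVal j (preReset t) ≤ 2 * K + 1)
    (hhigh : 2 * K + 1 ≤ max (prio (tLetter t)) (regVal K (tSrc t))) :
    tPrio t ≠ 2 * K ∧ 2 * K + 1 ≤ regVal K (tTgt t) := by
  have hpre : IsRegState n (preReset t) := hs.update (mem_trans_Raut.1 ht).1.2.2.1
  have hpreK : 2 * K + 1 ≤ regVal K (preReset t) := by
    rwa [preReset, regVal_update hs.1 hK (by rw [hs.2.1]; exact hKn)]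
  rcases Raut_trans_cases ht with ⟨hp, htgt⟩ | ⟨j, hj, hjn, hp, htgt⟩
  · exact ⟨by omega, htgt ▸ hpreK⟩
  · have hv := hreset j hj hjn htgt
    -- A reset of a register `j ≥ K` would find the odd value `2K + 1` there.
    have hjK : j < K := by
      by_contra! hKj
      have := regVal_le_regVal hpre.1 hK hKj (by rw [hpre.2.1]; exact hjn)
      omega
    refine ⟨by omega, ?_⟩
    rw [htgt, regVal_resetReg_of_lt hj hjK (by rw [hpre.2.1]; exact hKn)]
    exact hpreK

theorem IsRun.eventually_tPrio_ne {ρ : ℕ → Trans (List ℕ)} (hρ : IsRun (Raut n d) ρ)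
    {K : ℕ} (hK : 1 ≤ K) (hKn : K ≤ rn n)
    (hle : ∀ᶠ k in atTop, tPrio (ρ k) ≤ 2 * K ∧ prio (tLetter (ρ k)) ≤ 2 * K + 1)
    (hodd : ∃ᶠ k in atTop, prio (tLetter (ρ k)) = 2 * K + 1) :
    ∀ᶠ k in atTop, tPrio (ρ k) ≠ 2 * K := by
  obtain ⟨N, hN⟩ := eventually_atTop.1
    (hle.and (hρ.eventually_regVal_reset_le (by omega) (hle.mono fun _ h => h.2)))
  obtain ⟨t, htN, ht⟩ := frequently_atTop.1 hodd N
  have hstep : ∀ m ≥ t, 2 * K + 1 ≤ max (prio (tLetter (ρ m))) (regVal K (tSrc (ρ m))) →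
      tPrio (ρ m) ≠ 2 * K ∧ 2 * K + 1 ≤ regVal K (tSrc (ρ (m + 1))) := fun m hm hhigh =>
    (hρ.2 m).2 ▸ Raut_trans_keeps_high_register (hρ.2 m).1 (hρ.isRegState m) hK hKn
      (hN m (by omega)).1.1 (hN m (by omega)).2 hhigh
  have hhigh : ∀ m ≥ t, 2 * K + 1 ≤ max (prio (tLetter (ρ m))) (regVal K (tSrc (ρ m))) := by
    intro m hm
    induction m, hm using Nat.le_induction with
    | base => exact ht.ge.trans (le_max_left _ _)
    | succ m hm ih => exact (hstep m hm ih).2.trans (le_max_right _ _)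
  filter_upwards [eventually_ge_atTop t] with m hm using (hstep m hm (hhigh m hm)).1

theorem IsRun.not_accepting_of_echo {ρ : ℕ → Trans (List ℕ)} (hρ : IsRun (Raut n d) ρ)
    (hecho : ∀ k, prio (tLetter (ρ (k + 1))) = tPrio (ρ k) + 1) : ¬ Accepting ρ := by
  rintro ⟨p, ⟨K, rfl⟩, hp, hmax⟩
  have hbd : ∀ k, tPrio (ρ k) ≤ 2 * rn n + 1 := fun k => (Raut_tPrio_bounds (hρ.2 k).1).2
  obtain ⟨k₀, -, hk₀ : tPrio (ρ k₀) = K + K⟩ := hp 0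
  have hK := Raut_tPrio_bounds (hρ.2 k₀).1
  have hle : ∀ᶠ k in atTop, tPrio (ρ k) ≤ 2 * K :=
    (eventually_le_of_forall_infOft_le hbd hmax).mono fun k hk => by omega
  have hletter : ∀ᶠ k in atTop, prio (tLetter (ρ k)) ≤ 2 * K + 1 := by
    obtain ⟨N, hN⟩ := eventually_atTop.1 hle
    filter_upwards [eventually_ge_atTop (N + 1)] with k hk
    obtain ⟨i, rfl⟩ : ∃ i, k = i + 1 := ⟨k - 1, by omega⟩
    rw [hecho]
    exact Nat.succ_le_succ (hN i (by omega))
  have hodd : ∃ᶠ k in atTop, prio (tLetter (ρ k)) = 2 * K + 1 :=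
    (tendsto_add_atTop_nat 1).frequently <|
      (infOft_iff_frequently.1 hp).mono fun k hk => by rw [hecho, hk]; ring
  obtain ⟨k, h2K, hne⟩ := ((infOft_iff_frequently.1 hp).and_eventually
    (hρ.eventually_tPrio_ne (by omega) (by omega) (hle.and hletter) hodd)).exists
  exact hne (h2K.trans (two_mul K).symm)

def topResetStrat (n d E : ℕ) : TransStrat n d (Raut n d) where
  app _ s e :=
    if prio e = E then
      (s, e, 2 * rn n + regVal (rn n) (update (prio e) s) % 2, resetReg (rn n) (update (prio e) s))
    else (s, e, 1, update (prio e) s)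
  valid _ s e he := by
    split
    · exact ⟨mem_trans_Raut.2 ⟨he, Or.inr ⟨rn n, one_le_rn n, le_rfl, rfl, rfl⟩⟩, rfl, rfl⟩
    · exact ⟨mem_trans_Raut.2 ⟨he, Or.inl ⟨rfl, rfl⟩⟩, rfl, rfl⟩

theorem eventually_tPrio_followRun_topResetStrat {w : Word} (hw : ∀ k, InAlph n d (w k))
    {E : ℕ} (hE : Even E) (hE1 : 1 ≤ E) (hwle : ∀ᶠ k in atTop, prio (w k) ≤ E) :
    ∀ᶠ k in atTop, tPrio (followRun (Raut n d) (topResetStrat n d E) w k) =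
      if prio (w k) = E then 2 * rn n else 1 := by
  set σ := topResetStrat n d E
  set ρ := followRun (Raut n d) σ w
  have hρ : IsRun (Raut n d) ρ := isRun_followRun σ hw
  have hwle' : ∀ᶠ k in atTop, prio (tLetter (ρ k)) ≤ E :=
    hwle.mono fun k hk => by rwa [reads_followRun σ hw]
  -- Eventually the top register is reset only when it holds exactly `E`.
  filter_upwards [hρ.eventually_regVal_reset_le hE1 hwle'] with k hk
  set s := stateAt (Raut n d) σ w k
  by_cases hkE : prio (w k) = E
  · have hρk : ρ k = (s, w k, 2 * rn n + regVal (rn n) (update E s) % 2,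
        resetReg (rn n) (update E s)) := by
      show (if prio (w k) = E then _ else _) = _
      rw [if_pos hkE, hkE]
    have hs : IsRegState n s := by
      have := hρ.isRegState k
      rw [hρk] at this
      exact this
    have hle : regVal (rn n) (update E s) ≤ E := by
      have := hk (rn n) (one_le_rn n) le_rfl
      simp only [hρk, preReset, tTgt, tLetter, tSrc, hkE, true_implies] at this
      exact this
    have hge : E ≤ regVal (rn n) (update E s) := by
      rw [regVal_update hs.1 (one_le_rn n) hs.2.1.ge]
      exact le_max_left _ _
    rw [hρk, if_pos hkE]
    show 2 * rn n + regVal (rn n) (update E s) % 2 = 2 * rn n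
    rw [le_antisymm hle hge, Nat.even_iff.1 hE, Nat.add_zero]
  · show tPrio (if prio (w k) = E then _ else _) = _
    rw [if_neg hkE, if_neg hkE]
    rfl

theorem mem_Lang_Raut_of_limsupEven {w : Word} (hw : ∀ k, InAlph n d (w k))
    (h : LimsupEven w) : w ∈ Lang (Raut n d) := by
  obtain ⟨E, hE, hEinf, hEmax⟩ := h
  obtain ⟨k₀, -, hk₀ : prio (w k₀) = E⟩ := hEinf 0
  have hprio := eventually_tPrio_followRun_topResetStrat hw hE (hk₀ ▸ (hw k₀).2.2.1)
    (eventually_le_of_forall_infOft_le (fun k => (hw k).2.2.2.1) hEmax)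
  refine mem_lang_of_accepting_followRun (topResetStrat n d E) hw
    ⟨2 * rn n, even_two_mul _, ?_, fun q hq => ?_⟩
  · exact infOft_iff_frequently.2 <| ((infOft_iff_frequently.1 hEinf).and_eventually hprio).mono
      fun k hk => by rw [hk.2, if_pos hk.1]
  · have := one_le_rn n
    exact hq.le_of_eventually_le <| hprio.mono fun k hk => by
      rw [hk]
      split <;> omega

end RegisterAutomaton

theorem Raut_not_gfg_general (n d : ℕ) (hn : 1 ≤ n)
    (hd : 2 * rn n + 2 ≤ d) (σ : TransStrat n d (Raut n d)) :
    ∃ w ∈ Lang (Raut n d), ¬ Accepting (followRun (Raut n d) σ w) := by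
  set w := echoWord (Raut n d) σ
  have hw : ∀ k, InAlph n d (w k) := inAlph_echoWord σ hn (by omega)
    fun t ht => by have := (Raut_tPrio_bounds ht).2; omega
  have hρ := isRun_followRun σ hw
  have hecho : ∀ k, prio (w (k + 1)) = tPrio (followRun (Raut n d) σ w k) + 1 := fun k => by
    simp only [w, echoWord_succ]
    rfl
  have hrej : ¬ Accepting (followRun (Raut n d) σ w) :=
    hρ.not_accepting_of_echo fun k => by rw [reads_followRun σ hw, hecho]
  refine ⟨w, mem_Lang_Raut_of_limsupEven hw ?_, hrej⟩
  exact (MaxInfOftOdd.of_not_maxInfOftEven (fun k => (Raut_tPrio_bounds (hρ.2 k).1).2)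
    hrej).maxInfOftEven_of_succ hecho

/-- For `d ≥ 2·rn(n) + 2` (even), `R_{n,d}` is not good for games:
for every transition strategy `σ` there is a word of `L(R_{n,d})` on which the run
following `σ` is rejecting. -/
theorem Raut_not_gfg (n d : ℕ) (hn : 1 ≤ n) (hde : Even d)
    (hd : 2 * rn n + 2 ≤ d) (σ : TransStrat n d (Raut n d)) :
    ∃ w ∈ Lang (Raut n d), ¬ Accepting (followRun (Raut n d) σ w) :=
  Raut_not_gfg_general n d hn hd σ

end PGSep
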